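/- For every nonnegative integer n, t(1,1,6;8n+4) = 2·t(1,1,3;n) and t(1,1,6;32n+19) = 4·t(1,1,3;n). -/
import Mathlib

set_option maxHeartbeats 1000000

def tri (x : ℤ) : ℤ := x * (x + 1) / 2

noncomputable def N (a b c n : ℕ) : ℕ :=
  Nat.card {p : ℤ × ℤ × ℤ // (n : ℤ) = a * p.1 ^ 2 + b * p.2.1 ^ 2 + c * p.2.2 ^ 2}

noncomputable def t (a b c n : ℕ) : ℕ :=
  Nat.card {p : ℤ × ℤ × ℤ // (n : ℤ) = a * tri p.1 + b * tri p.2.1 + c * tri p.2.2}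

noncomputable def T (a b c n : ℕ) : ℕ :=
  Nat.card {p : ℕ × ℕ × ℕ // (n : ℤ) = a * tri p.1 + b * tri p.2.1 + c * tri p.2.2}

def SOg (m : ℤ) : Type := {v : ℤ × ℤ × ℤ //
  v.1 % 2 = 1 ∧ v.2.1 % 2 = 1 ∧ v.2.2 % 2 = 1 ∧ v.1^2 + v.2.1^2 + 3*v.2.2^2 = m}
def SEg (m : ℤ) : Type := {v : ℤ × ℤ × ℤ //
  v.1 % 2 = 0 ∧ v.2.1 % 2 = 1 ∧ v.2.2 % 2 = 1 ∧ v.1^2 + v.2.1^2 + 3*v.2.2^2 = m}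
def SQg (m : ℤ) : Type := {v : ℤ × ℤ × ℤ //
  v.1 % 2 = 1 ∧ v.2.1 % 2 = 0 ∧ v.2.2 % 2 = 1 ∧ v.1^2 + v.2.1^2 + 3*v.2.2^2 = m}
def SBg (m : ℤ) : Type := {v : ℤ × ℤ × ℤ //
  (v.1 + v.2.1) % 2 = 1 ∧ v.2.2 % 2 = 1 ∧ v.1^2 + v.2.1^2 + 3*v.2.2^2 = m}
noncomputable def tSet (a b c n' : ℕ) : Type :=
  {p : ℤ × ℤ × ℤ // (n' : ℤ) = a * tri p.1 + b * tri p.2.1 + c * tri p.2.2}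


lemma two_tri (x : ℤ) : 2 * tri x = x^2 + x := by
  unfold tri
  obtain ⟨k, hk⟩ := Int.even_mul_succ_self x
  have h : x^2 + x = x * (x+1) := by ring
  rw [h, hk]; omega

-- swap equiv for SQg/SEg
def e8g (m : ℤ) : SQg m ≃ SEg m where
  toFun := fun ⟨⟨p, q, z⟩, hv⟩ => ⟨(q, p, z), by
    obtain ⟨h1, h2, h3, h4⟩ := hv; dsimp only at *
    exact ⟨h2, h1, h3, by linarith⟩⟩
  invFun := fun ⟨⟨p, q, z⟩, hv⟩ => ⟨(q, p, z), by
    obtain ⟨h1, h2, h3, h4⟩ := hv; dsimp only at *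
    exact ⟨h2, h1, h3, by linarith⟩⟩
  left_inv := by rintro ⟨⟨p, q, z⟩, hv⟩; rfl
  right_inv := by rintro ⟨⟨p, q, z⟩, hv⟩; rfl

-- triangular side equivs
def e1 (n : ℕ) : tSet 1 1 3 n ≃ SOg (8*(n:ℤ)+5) where
  toFun := fun ⟨⟨x, y, w⟩, hv⟩ => ⟨(2*x+1, 2*y+1, 2*w+1), by
    dsimp only at hv ⊢
    push_cast at hv
    refine ⟨by omega, by omega, by omega, ?_⟩
    linarith [two_tri x, two_tri y, two_tri w, hv]⟩
  invFun := fun ⟨⟨a, b, c⟩, hw⟩ => ⟨((a-1)/2, (b-1)/2, (c-1)/2), by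
    obtain ⟨h1, h2, h3, hf⟩ := hw; dsimp only at *
    push_cast
    have ha : a = 2*((a-1)/2)+1 := by omega
    have hb : b = 2*((b-1)/2)+1 := by omega
    have hc : c = 2*((c-1)/2)+1 := by omega
    generalize hx : (a-1)/2 = x at *
    generalize hy : (b-1)/2 = y at *
    generalize hw' : (c-1)/2 = w at *
    rw [ha, hb, hc] at hf
    linarith [two_tri x, two_tri y, two_tri w, hf]⟩
  left_inv := by
    rintro ⟨⟨x, y, w⟩, hv⟩
    apply Subtype.ext
    refine Prod.ext ?_ (Prod.ext ?_ ?_) <;> dsimp only <;> omega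
  right_inv := by
    rintro ⟨⟨a, b, c⟩, hw⟩
    obtain ⟨h1, h2, h3, hf⟩ := hw
    dsimp only at h1 h2 h3
    apply Subtype.ext
    refine Prod.ext ?_ (Prod.ext ?_ ?_) <;> dsimp only <;> omega

def e2g (N' : ℕ) (m : ℤ) (hm : m = 4*(N':ℤ)+4) : tSet 1 1 6 N' ≃ SBg m where
  toFun := fun ⟨⟨x, y, w⟩, hv⟩ => ⟨(x+y+1, x-y, 2*w+1), by
    dsimp only at hv ⊢
    push_cast at hv
    refine ⟨by omega, by omega, ?_⟩
    rw [hm]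
    linarith [two_tri x, two_tri y, two_tri w, hv]⟩
  invFun := fun ⟨⟨p, q, c⟩, hw⟩ => ⟨((p+q-1)/2, (p-q-1)/2, (c-1)/2), by
    obtain ⟨h1, h2, hf⟩ := hw; dsimp only at *
    rw [hm] at hf
    push_cast
    have hx : p = ((p+q-1)/2) + ((p-q-1)/2) + 1 := by omega
    have hy : q = ((p+q-1)/2) - ((p-q-1)/2) := by omega
    have hc : c = 2*((c-1)/2)+1 := by omega
    generalize hX : (p+q-1)/2 = x at *
    generalize hY : (p-q-1)/2 = y at *
    generalize hW : (c-1)/2 = w at *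
    rw [hx, hy, hc] at hf
    linarith [two_tri x, two_tri y, two_tri w, hf]⟩
  left_inv := by
    rintro ⟨⟨x, y, w⟩, hv⟩
    apply Subtype.ext
    refine Prod.ext ?_ (Prod.ext ?_ ?_) <;> dsimp only <;> omega
  right_inv := by
    rintro ⟨⟨p, q, c⟩, hw⟩
    obtain ⟨h1, h2, hf⟩ := hw
    dsimp only at h1 h2
    apply Subtype.ext
    refine Prod.ext ?_ (Prod.ext ?_ ?_) <;> dsimp only <;> omega

lemma even_sq_add (a : ℤ) : ∃ k, a^2 + a = 2*k := by
  obtain ⟨k, hk⟩ := Int.even_mul_succ_self a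
  exact ⟨k, by linear_combination hk⟩

lemma odd_sq (c : ℤ) (h : c % 2 = 1) : ∃ k, c^2 = 8*k+1 := by
  obtain ⟨d, rfl⟩ : ∃ d, c = 2*d+1 := ⟨(c-1)/2, by omega⟩
  obtain ⟨k, hk⟩ := even_sq_add d
  exact ⟨k, by linear_combination 4*hk⟩

lemma sq_par (c : ℤ) : ∃ k, c^2 = 2*k + c % 2 := by
  rcases Int.even_or_odd c with ⟨d, rfl⟩ | ⟨d, rfl⟩
  · exact ⟨2*d*d, by have h : (d+d) % 2 = 0 := by omega
                     rw [h]; ring⟩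
  · obtain ⟨k, hk⟩ := odd_sq (2*d+1) (by omega)
    exact ⟨4*k, by omega⟩

lemma pdiv4 (n p q z : ℤ) (hp : p % 2 = 0) (hq : q % 2 = 1) (hz : z % 2 = 1)
    (hf : p^2+q^2+3*z^2 = 32*n+20) : p % 4 = 0 := by
  obtain ⟨c, rfl⟩ : ∃ c, p = 2*c := ⟨p/2, by omega⟩
  suffices h : c % 2 = 0 by omega
  by_contra h
  obtain ⟨γ, hγ⟩ := odd_sq c (by omega)
  obtain ⟨a, rfl⟩ : ∃ a, q = 2*a+1 := ⟨(q-1)/2, by omega⟩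
  obtain ⟨b, rfl⟩ : ∃ b, z = 2*b+1 := ⟨(z-1)/2, by omega⟩
  obtain ⟨α, hα⟩ := even_sq_add a
  obtain ⟨β, hβ⟩ := even_sq_add b
  have key : 4*(8*γ+1) + (8*α+1) + (24*β+3) = 32*n+20 := by
    linear_combination hf - 4*hγ - 4*hα - 12*hβ
  omega

lemma Sodd (n p q z S : ℤ) (hp4 : p % 4 = 0) (hq : q % 2 = 1) (hz : z % 2 = 1)
    (hf : p^2+q^2+3*z^2 = 32*n+20) (hS : q + 3*z = 4*S) : S % 2 = 1 := by
  obtain ⟨P, rfl⟩ : ∃ P, p = 4*P := ⟨p/4, by omega⟩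
  by_contra h
  obtain ⟨σ, rfl⟩ : ∃ σ, S = 2*σ := ⟨S/2, by omega⟩
  obtain ⟨τ, hτ⟩ := odd_sq (2*σ - z) (by omega)
  have key : 16*P^2 + 16*σ^2 + 96*τ + 12 = 32*n + 20 := by
    linear_combination hf - (q + 8*σ - 3*z) * hS - 12*hτ
  obtain ⟨X, Y, hXY⟩ : ∃ X Y, 16*X+16*Y+96*τ+12 = 32*n+20 := ⟨P^2, σ^2, key⟩
  omega

lemma Pe_odd (n P S z e q : ℤ) (hz : z % 2 = 1) (hS : S % 2 = 1)
    (he : S = z + 2*e) (hp : q + 3*z = 4*S)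
    (hf : (4*P)^2+q^2+3*z^2 = 32*n+20) : (P+e) % 2 = 1 := by
  have hq : q = z + 8*e := by omega
  subst hq he
  obtain ⟨b, rfl⟩ : ∃ b, z = 2*b+1 := ⟨(z-1)/2, by omega⟩
  obtain ⟨β, hβ⟩ := even_sq_add b
  obtain ⟨kP, hkP⟩ := sq_par P
  obtain ⟨ke, hke⟩ := sq_par e
  have key : 16*(2*kP + P % 2) + 32*β + 4 + 32*(e*b) + 16*e + 64*(2*ke + e % 2) = 32*n+20 := by
    linear_combination hf - 16*hkP - 16*hβ - 64*hke
  obtain ⟨EB, hEB⟩ : ∃ EB, e*b = EB := ⟨_, rfl⟩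
  rw [hEB] at key
  omega


def Fmap (v : ℤ × ℤ × ℤ) : ℤ × ℤ × ℤ :=
  if (v.2.1 + 3*v.2.2) % 4 = 0 then
    ((v.2.1+3*v.2.2)/4,
     v.1/4 + 3*(((v.2.1+3*v.2.2)/4 - v.2.2)/2),
     v.1/4 - (((v.2.1+3*v.2.2)/4 - v.2.2)/2))
  else
    ((3*v.2.2-v.2.1)/4,
     v.1/4 + 3*(((3*v.2.2-v.2.1)/4 - v.2.2)/2),
     (((3*v.2.2-v.2.1)/4 - v.2.2)/2) - v.1/4)

def Gmap (w : ℤ × ℤ × ℤ) : ℤ × ℤ × ℤ :=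
  if (w.2.1 - w.2.2) % 4 = 0 then
    (4*((w.2.1-w.2.2)/4 + w.2.2), w.1 + 6*((w.2.1-w.2.2)/4), w.1 - 2*((w.2.1-w.2.2)/4))
  else
    (4*((w.2.1+w.2.2)/4 - w.2.2), -(w.1 + 6*((w.2.1+w.2.2)/4)), w.1 - 2*((w.2.1+w.2.2)/4))

lemma Fmem (n p q z : ℤ) (h1 : p % 2 = 0) (h2 : q % 2 = 1) (h3 : z % 2 = 1)
    (hf : p^2+q^2+3*z^2 = 32*n+20) :
    (Fmap (p,q,z)).1 % 2 = 1 ∧ (Fmap (p,q,z)).2.1 % 2 = 1 ∧ (Fmap (p,q,z)).2.2 % 2 = 1 ∧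
      (Fmap (p,q,z)).1^2 + (Fmap (p,q,z)).2.1^2 + 3*(Fmap (p,q,z)).2.2^2 = 8*n+5 := by
  have hp4 : p % 4 = 0 := pdiv4 n p q z h1 h2 h3 hf
  unfold Fmap
  dsimp only
  split_ifs with h <;> (try dsimp only)
  · have hSo : (q+3*z)/4 % 2 = 1 := Sodd n p q z _ hp4 h2 h3 hf (by omega)
    have hf4 : (4*(p/4))^2 + q^2 + 3*z^2 = 32*n+20 := by
      rw [show (4*(p/4) : ℤ) = p by omega]; exact hf
    have hPe : (p/4 + ((q+3*z)/4 - z)/2) % 2 = 1 :=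
      Pe_odd n (p/4) ((q+3*z)/4) z (((q+3*z)/4 - z)/2) q h3 hSo (by omega) (by omega) hf4
    refine ⟨hSo, by omega, by omega, ?_⟩
    have hq'' : q = z + 8*(((q+3*z)/4 - z)/2) := by omega
    have hz'' : z = (q+3*z)/4 - 2*(((q+3*z)/4 - z)/2) := by omega
    generalize hS : (q+3*z)/4 = S at *
    generalize hE : (S - z)/2 = e at *
    generalize hP : p/4 = P at *
    rw [hq'', hz''] at hf4
    linarith [hf4]
  · have h' : (3*z - q) % 4 = 0 := by omega
    have hfneg : p^2 + (-q)^2 + 3*z^2 = 32*n+20 := by linear_combination hf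
    have hSo : (3*z-q)/4 % 2 = 1 := Sodd n p (-q) z _ hp4 (by omega) h3 hfneg (by omega)
    have hf4 : (4*(p/4))^2 + (-q)^2 + 3*z^2 = 32*n+20 := by
      rw [show (4*(p/4) : ℤ) = p by omega]; exact hfneg
    have hPe : (p/4 + ((3*z-q)/4 - z)/2) % 2 = 1 :=
      Pe_odd n (p/4) ((3*z-q)/4) z (((3*z-q)/4 - z)/2) (-q) h3 hSo (by omega) (by omega) hf4
    refine ⟨hSo, by omega, by omega, ?_⟩
    have hq'' : -q = z + 8*(((3*z-q)/4 - z)/2) := by omega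
    have hz'' : z = (3*z-q)/4 - 2*(((3*z-q)/4 - z)/2) := by omega
    generalize hS : (3*z-q)/4 = S at *
    generalize hE : (S - z)/2 = e at *
    generalize hP : p/4 = P at *
    rw [hq'', hz''] at hf4
    linarith [hf4]

lemma Gmem (n a b c : ℤ) (h1 : a % 2 = 1) (h2 : b % 2 = 1) (h3 : c % 2 = 1)
    (hf : a^2+b^2+3*c^2 = 8*n+5) :
    (Gmap (a,b,c)).1 % 2 = 0 ∧ (Gmap (a,b,c)).2.1 % 2 = 1 ∧ (Gmap (a,b,c)).2.2 % 2 = 1 ∧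
      (Gmap (a,b,c)).1^2 + (Gmap (a,b,c)).2.1^2 + 3*(Gmap (a,b,c)).2.2^2 = 32*n+20 := by
  unfold Gmap
  dsimp only
  split_ifs with h <;> (try dsimp only)
  · refine ⟨by omega, by omega, by omega, ?_⟩
    have hb : b = c + 4*((b-c)/4) := by omega
    generalize hE : (b-c)/4 = e at *
    rw [hb] at hf
    linarith [hf]
  · have h' : (b + c) % 4 = 0 := by omega
    refine ⟨by omega, by omega, by omega, ?_⟩
    have hb : b = 4*((b+c)/4) - c := by omega
    generalize hE : (b+c)/4 = e at *
    rw [hb] at hf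
    linarith [hf]

lemma GF (n p q z : ℤ) (h1 : p % 2 = 0) (h2 : q % 2 = 1) (h3 : z % 2 = 1)
    (hf : p^2+q^2+3*z^2 = 32*n+20) : Gmap (Fmap (p,q,z)) = (p,q,z) := by
  have hp4 : p % 4 = 0 := pdiv4 n p q z h1 h2 h3 hf
  unfold Fmap
  dsimp only
  split_ifs with h <;> (try dsimp only)
  · have hSo : (q+3*z)/4 % 2 = 1 := Sodd n p q z _ hp4 h2 h3 hf (by omega)
    unfold Gmap
    dsimp only
    rw [if_pos (by omega : ((p/4 + 3*(((q+3*z)/4 - z)/2)) - (p/4 - (((q+3*z)/4 - z)/2))) % 4 = 0)]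
    refine Prod.ext ?_ (Prod.ext ?_ ?_) <;> dsimp only <;> omega
  · have h' : (3*z - q) % 4 = 0 := by omega
    have hfneg : p^2 + (-q)^2 + 3*z^2 = 32*n+20 := by linear_combination hf
    have hSo : (3*z-q)/4 % 2 = 1 := Sodd n p (-q) z _ hp4 (by omega) h3 hfneg (by omega)
    have hf4 : (4*(p/4))^2 + (-q)^2 + 3*z^2 = 32*n+20 := by
      rw [show (4*(p/4) : ℤ) = p by omega]; exact hfneg
    have hPe : (p/4 + ((3*z-q)/4 - z)/2) % 2 = 1 :=
      Pe_odd n (p/4) ((3*z-q)/4) z (((3*z-q)/4 - z)/2) (-q) h3 hSo (by omega) (by omega) hf4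
    unfold Gmap
    dsimp only
    rw [if_neg (by omega : ¬ ((p/4 + 3*(((3*z-q)/4 - z)/2)) - ((((3*z-q)/4 - z)/2) - p/4)) % 4 = 0)]
    refine Prod.ext ?_ (Prod.ext ?_ ?_) <;> dsimp only <;> omega

lemma FG (a b c : ℤ) (h1 : a % 2 = 1) (h2 : b % 2 = 1) (h3 : c % 2 = 1) :
    Fmap (Gmap (a,b,c)) = (a,b,c) := by
  unfold Gmap
  dsimp only
  split_ifs with h <;> (try dsimp only)
  · unfold Fmap
    dsimp only
    rw [if_pos (by omega : ((a + 6*((b-c)/4)) + 3*(a - 2*((b-c)/4))) % 4 = 0)]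
    refine Prod.ext ?_ (Prod.ext ?_ ?_) <;> dsimp only <;> omega
  · have h' : (b + c) % 4 = 0 := by omega
    unfold Fmap
    dsimp only
    rw [if_neg (by omega : ¬ (-(a + 6*((b+c)/4)) + 3*(a - 2*((b+c)/4))) % 4 = 0)]
    refine Prod.ext ?_ (Prod.ext ?_ ?_) <;> dsimp only <;> omega

def e4 (n : ℤ) : SEg (32*n+20) ≃ SOg (8*n+5) where
  toFun v := ⟨Fmap v.val, by
    obtain ⟨⟨p,q,z⟩, hv⟩ := v
    exact Fmem n p q z hv.1 hv.2.1 hv.2.2.1 hv.2.2.2⟩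
  invFun w := ⟨Gmap w.val, by
    obtain ⟨⟨a,b,c⟩, hw⟩ := w
    exact Gmem n a b c hw.1 hw.2.1 hw.2.2.1 hw.2.2.2⟩
  left_inv := by
    rintro ⟨⟨p,q,z⟩, hv⟩
    exact Subtype.ext (GF n p q z hv.1 hv.2.1 hv.2.2.1 hv.2.2.2)
  right_inv := by
    rintro ⟨⟨a,b,c⟩, hw⟩
    exact Subtype.ext (FG a b c hw.1 hw.2.1 hw.2.2.1)

lemma phalf_odd (n p q z : ℤ) (hp : p % 2 = 0) (hq : q % 2 = 1) (hz : z % 2 = 1)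
    (hf : p^2+q^2+3*z^2 = 128*n+80) : p % 4 = 2 := by
  obtain ⟨c, rfl⟩ : ∃ c, p = 2*c := ⟨p/2, by omega⟩
  suffices h : c % 2 = 1 by omega
  by_contra h
  obtain ⟨d, rfl⟩ : ∃ d, c = 2*d := ⟨c/2, by omega⟩
  obtain ⟨a, rfl⟩ : ∃ a, q = 2*a+1 := ⟨(q-1)/2, by omega⟩
  obtain ⟨b, rfl⟩ : ∃ b, z = 2*b+1 := ⟨(z-1)/2, by omega⟩
  obtain ⟨α, hα⟩ := even_sq_add a
  obtain ⟨β, hβ⟩ := even_sq_add b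
  have key : 16*d^2 + (8*α+1) + (24*β+3) = 128*n+80 := by
    linear_combination hf - 4*hα - 12*hβ
  obtain ⟨X, hX⟩ : ∃ X, 16*X + 8*α+1+24*β+3 = 128*n+80 := ⟨d^2, by linarith⟩
  omega

lemma Seven (n p q z S : ℤ) (hp : p % 4 = 2) (hq : q % 2 = 1) (hz : z % 2 = 1)
    (hf : p^2+q^2+3*z^2 = 128*n+80) (hS : q + 3*z = 4*S) : S % 2 = 0 := by
  obtain ⟨c, rfl⟩ : ∃ c, p = 2*c := ⟨p/2, by omega⟩
  by_contra h
  have hq' : q = 4*S - 3*z := by omega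
  obtain ⟨e, he⟩ : ∃ e, S = z + 2*e := ⟨(S-z)/2, by omega⟩
  obtain ⟨γ, hγ⟩ := odd_sq c (by omega)
  obtain ⟨b, rfl⟩ : ∃ b, z = 2*b+1 := ⟨(z-1)/2, by omega⟩
  obtain ⟨β, hβ⟩ := even_sq_add b
  subst hq' he
  obtain ⟨ke, hke⟩ := sq_par e
  have key : 4*(8*γ+1) + 32*β + 4 + 32*(e*b) + 16*e + 64*(2*ke + e % 2) = 128*n+80 := by
    linear_combination hf - 4*hγ - 16*hβ - 64*hke
  obtain ⟨EB, hEB⟩ : ∃ EB, e*b = EB := ⟨_, rfl⟩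
  rw [hEB] at key
  have h2 : e % 2 = 0 ∨ e % 2 = 1 := by omega
  omega


def F2map (v : ℤ × ℤ × ℤ) : ℤ × ℤ × ℤ :=
  if (v.2.1 + 3*v.2.2) % 4 = 0 then
    (v.1/2, (v.2.1+3*v.2.2)/4, (v.2.1+3*v.2.2)/4 - v.2.2)
  else
    (v.1/2, (3*v.2.2-v.2.1)/4, (3*v.2.2-v.2.1)/4 - v.2.2)

def G2map : Bool → ℤ × ℤ × ℤ → ℤ × ℤ × ℤ
  | true, w => (2*w.1, w.2.1 + 3*w.2.2, w.2.1 - w.2.2)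
  | false, w => (2*w.1, -(w.2.1 + 3*w.2.2), w.2.1 - w.2.2)

lemma F2mem (n p q z : ℤ) (h1 : p % 2 = 0) (h2 : q % 2 = 1) (h3 : z % 2 = 1)
    (hf : p^2+q^2+3*z^2 = 128*n+80) :
    (F2map (p,q,z)).1 % 2 = 1 ∧ (F2map (p,q,z)).2.1 % 2 = 0 ∧ (F2map (p,q,z)).2.2 % 2 = 1 ∧
      (F2map (p,q,z)).1^2 + (F2map (p,q,z)).2.1^2 + 3*(F2map (p,q,z)).2.2^2 = 32*n+20 := by
  have hp2 : p % 4 = 2 := phalf_odd n p q z h1 h2 h3 hf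
  unfold F2map
  dsimp only
  split_ifs with h <;> (try dsimp only)
  · have hSe : (q+3*z)/4 % 2 = 0 := Seven n p q z _ hp2 h2 h3 hf (by omega)
    refine ⟨by omega, hSe, by omega, ?_⟩
    have hq'' : q = 4*((q+3*z)/4) - 3*z := by omega
    have hp'' : p = 2*(p/2) := by omega
    generalize hS : (q+3*z)/4 = S at *
    generalize hP : p/2 = c at *
    rw [hp''] at hf
    rw [hq''] at hf
    linarith [hf]
  · have h' : (3*z - q) % 4 = 0 := by omega
    have hfneg : p^2 + (-q)^2 + 3*z^2 = 128*n+80 := by linear_combination hf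
    have hSe : (3*z-q)/4 % 2 = 0 := Seven n p (-q) z _ hp2 (by omega) h3 hfneg (by omega)
    refine ⟨by omega, hSe, by omega, ?_⟩
    have hq'' : -q = 4*((3*z-q)/4) - 3*z := by omega
    have hp'' : p = 2*(p/2) := by omega
    generalize hS : (3*z-q)/4 = S at *
    generalize hP : p/2 = c at *
    rw [hp''] at hfneg
    rw [hq''] at hfneg
    linarith [hfneg]

lemma G2mem (n c S t : ℤ) (e : Bool) (h1 : c % 2 = 1) (h2 : S % 2 = 0) (h3 : t % 2 = 1)
    (hf : c^2+S^2+3*t^2 = 32*n+20) :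
    (G2map e (c,S,t)).1 % 2 = 0 ∧ (G2map e (c,S,t)).2.1 % 2 = 1 ∧ (G2map e (c,S,t)).2.2 % 2 = 1 ∧
      (G2map e (c,S,t)).1^2 + (G2map e (c,S,t)).2.1^2 + 3*(G2map e (c,S,t)).2.2^2 = 128*n+80 := by
  cases e <;> dsimp only [G2map] <;>
    exact ⟨by omega, by omega, by omega, by linarith [hf]⟩

def e7 (n : ℤ) : SEg (128*n+80) ≃ Bool × SQg (32*n+20) where
  toFun := fun v =>
    (if (v.val.2.1 + 3*v.val.2.2) % 4 = 0 then true else false,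
     ⟨F2map v.val, by
        obtain ⟨⟨p,q,z⟩, hv⟩ := v
        exact F2mem n p q z hv.1 hv.2.1 hv.2.2.1 hv.2.2.2⟩)
  invFun := fun ew => ⟨G2map ew.1 ew.2.val, by
    obtain ⟨e, ⟨⟨c,S,t⟩, hw⟩⟩ := ew
    exact G2mem n c S t e hw.1 hw.2.1 hw.2.2.1 hw.2.2.2⟩
  left_inv := by
    rintro ⟨⟨p,q,z⟩, hv⟩
    obtain ⟨h1, h2, h3, hf⟩ := hv
    dsimp only at h1 h2 h3 hf
    apply Subtype.ext
    dsimp only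
    by_cases h : (q + 3*z) % 4 = 0
    · rw [if_pos h]
      unfold F2map
      dsimp only
      rw [if_pos h]
      dsimp only [G2map]
      refine Prod.ext ?_ (Prod.ext ?_ ?_) <;> dsimp only <;> omega
    · rw [if_neg h]
      have h' : (3*z - q) % 4 = 0 := by omega
      unfold F2map
      dsimp only
      rw [if_neg h]
      dsimp only [G2map]
      refine Prod.ext ?_ (Prod.ext ?_ ?_) <;> dsimp only <;> omega
  right_inv := by
    rintro ⟨e, ⟨⟨c,S,t⟩, hw⟩⟩
    obtain ⟨h1, h2, h3, hf⟩ := hw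
    dsimp only at h1 h2 h3 hf
    cases e
    · have hcond : ¬ ((G2map false (c,S,t)).2.1 + 3*(G2map false (c,S,t)).2.2) % 4 = 0 := by
        dsimp only [G2map]; omega
      refine Prod.ext ?_ (Subtype.ext ?_) <;> (try dsimp only)
      · rw [if_neg hcond]
      · dsimp only [G2map] at hcond ⊢
        unfold F2map
        dsimp only
        rw [if_neg hcond]
        refine Prod.ext ?_ (Prod.ext ?_ ?_) <;> dsimp only <;> omega
    · have hcond : ((G2map true (c,S,t)).2.1 + 3*(G2map true (c,S,t)).2.2) % 4 = 0 := by
        dsimp only [G2map]; omega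
      refine Prod.ext ?_ (Subtype.ext ?_) <;> (try dsimp only)
      · rw [if_pos hcond]
      · dsimp only [G2map] at hcond ⊢
        unfold F2map
        dsimp only
        rw [if_pos hcond]
        refine Prod.ext ?_ (Prod.ext ?_ ?_) <;> dsimp only <;> omega

def e3g (m : ℤ) : SBg m ≃ Bool × SEg m where
  toFun := fun ⟨⟨p, q, z⟩, hv⟩ =>
    if h : p % 2 = 0 then
      (true, ⟨(p, q, z), by obtain ⟨h1, h2, h3⟩ := hv; dsimp only at *
                            exact ⟨h, by omega, h2, h3⟩⟩)
    else
      (false, ⟨(q, p, z), by obtain ⟨h1, h2, h3⟩ := hv; dsimp only at *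
                             exact ⟨by omega, by omega, h2, by linarith⟩⟩)
  invFun := fun bw => match bw with
    | (true, ⟨(p, q, z), hw⟩) =>
        ⟨(p, q, z), by obtain ⟨h1, h2, h3, h4⟩ := hw; dsimp only at *
                       exact ⟨by omega, h3, h4⟩⟩
    | (false, ⟨(p, q, z), hw⟩) =>
        ⟨(q, p, z), by obtain ⟨h1, h2, h3, h4⟩ := hw; dsimp only at *
                       exact ⟨by omega, h3, by linarith⟩⟩
  left_inv := by
    rintro ⟨⟨p, q, z⟩, hv⟩
    dsimp only
    by_cases h : p % 2 = 0
    · rw [dif_pos h]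
    · rw [dif_neg h]
  right_inv := by
    rintro ⟨b, ⟨⟨p, q, z⟩, hw⟩⟩
    obtain ⟨h1, h2, h3, h4⟩ := hw
    cases b
    · dsimp only
      rw [dif_neg (by dsimp only at h2; omega : ¬ q % 2 = 0)]
    · dsimp only
      rw [dif_pos h1]

theorem stmt9 (n : ℕ) :
    t 1 1 6 (8 * n + 4) = 2 * t 1 1 3 n ∧ t 1 1 6 (32 * n + 19) = 4 * t 1 1 3 n := by
  have ht3 : t 1 1 3 n = Nat.card (tSet 1 1 3 n) := rfl
  have ht6a : t 1 1 6 (8 * n + 4) = Nat.card (tSet 1 1 6 (8 * n + 4)) := rfl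
  have ht6b : t 1 1 6 (32 * n + 19) = Nat.card (tSet 1 1 6 (32 * n + 19)) := rfl
  have h113 : t 1 1 3 n = Nat.card (SOg (8*(n:ℤ)+5)) := by
    rw [ht3]; exact Nat.card_congr (e1 n)
  have cardBool : ∀ (X : Type), Nat.card (Bool × X) = 2 * Nat.card X := by
    intro X; rw [Nat.card_prod]; simp [Nat.card_eq_fintype_card]
  have hE4 : Nat.card (SEg (32*(n:ℤ)+20)) = Nat.card (SOg (8*(n:ℤ)+5)) :=
    Nat.card_congr (e4 (n:ℤ))
  constructor
  · have hB : t 1 1 6 (8 * n + 4) = Nat.card (SBg (32*(n:ℤ)+20)) := by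
      rw [ht6a]; exact Nat.card_congr (e2g (8*n+4) (32*(n:ℤ)+20) (by push_cast; ring))
    rw [hB, Nat.card_congr (e3g (32*(n:ℤ)+20)), cardBool, hE4, ← h113]
  · have hB2 : t 1 1 6 (32 * n + 19) = Nat.card (SBg (128*(n:ℤ)+80)) := by
      rw [ht6b]; exact Nat.card_congr (e2g (32*n+19) (128*(n:ℤ)+80) (by push_cast; ring))
    have hQ : Nat.card (SQg (32*(n:ℤ)+20)) = Nat.card (SEg (32*(n:ℤ)+20)) :=
      Nat.card_congr (e8g (32*(n:ℤ)+20))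
    have hE2 : Nat.card (SEg (128*(n:ℤ)+80)) = 2 * Nat.card (SQg (32*(n:ℤ)+20)) := by
      rw [Nat.card_congr (e7 (n:ℤ)), cardBool]
    rw [hB2, Nat.card_congr (e3g (128*(n:ℤ)+80)), cardBool, hE2, hQ, hE4, ← h113]
    ring
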